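/- arXiv:2401.13008 — 6 statements merged into one kernel-verified Lean document; each statement's English description precedes it below -/
import Mathlib

section
/- Let K be a compact Hausdorff space, H a nonempty subset of C(K, K_C), and Conv(H) = {φ ∈ C(K,[0,1]) : φf + (1−φ)g ∈ H for all f,g ∈ H}, where (φf + (1−φ)g)(k) = φ(k)·f(k) + (1−φ(k))·g(k) using interval scalar multiplication and Minkowski addition. If φ, ψ ∈ Conv(H), then the pointwise product φ·ψ ∈ Conv(H). -/
/-- The space `K_C` of nonempty compact intervals of `ℝ`, given by endpoints. -/
structure KC where
  lo : ℝ
  hi : ℝ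
  isLe : lo ≤ hi

namespace KC

@[ext] theorem ext' {A B : KC} (h1 : A.lo = B.lo) (h2 : A.hi = B.hi) : A = B := by
  cases A; cases B; simp_all

/-- Minkowski addition. -/
instance : Add KC := ⟨fun A B => ⟨A.lo + B.lo, A.hi + B.hi, add_le_add A.isLe B.isLe⟩⟩

instance : Zero KC := ⟨⟨0, 0, le_refl 0⟩⟩

/-- Scalar multiplication `λ·[a,b] = {λx : x ∈ [a,b]}`. -/
noncomputable instance : SMul ℝ KC :=
  ⟨fun c A => ⟨min (c * A.lo) (c * A.hi), max (c * A.lo) (c * A.hi), min_le_max⟩⟩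

noncomputable instance : AddCommMonoid KC where
  add_assoc A B C := by ext <;> exact add_assoc _ _ _
  zero_add A := by ext <;> exact zero_add _
  add_zero A := by ext <;> exact add_zero _
  add_comm A B := by ext <;> exact add_comm _ _
  nsmul := nsmulRec

/-- The Hausdorff metric on `K_C`: `d_H([a,b],[c,d]) = max {|a-c|, |b-d|}`. -/
noncomputable instance : MetricSpace KC where
  dist A B := max |A.lo - B.lo| |A.hi - B.hi|
  dist_self A := by simp
  dist_comm A B := by simp [abs_sub_comm]
  dist_triangle A B C := by
    apply max_le
    · calc |A.lo - C.lo| ≤ |A.lo - B.lo| + |B.lo - C.lo| := abs_sub_le _ _ _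
        _ ≤ _ := add_le_add (le_max_left _ _) (le_max_left _ _)
    · calc |A.hi - C.hi| ≤ |A.hi - B.hi| + |B.hi - C.hi| := abs_sub_le _ _ _
        _ ≤ _ := add_le_add (le_max_right _ _) (le_max_right _ _)
  eq_of_dist_eq_zero := by
    intro A B h
    have h1 : |A.lo - B.lo| = 0 :=
      le_antisymm (le_of_le_of_eq (le_max_left _ _) h) (abs_nonneg _)
    have h2 : |A.hi - B.hi| = 0 :=
      le_antisymm (le_of_le_of_eq (le_max_right _ _) h) (abs_nonneg _)
    ext
    · linarith [abs_eq_zero.mp h1]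
    · linarith [abs_eq_zero.mp h2]

/-- The generalized Hukuhara difference. -/
noncomputable def gH (A B : KC) : KC :=
  ⟨min (A.lo - B.lo) (A.hi - B.hi), max (A.lo - B.lo) (A.hi - B.hi), min_le_max⟩

/-- The length (diameter) of an interval. -/
def len (A : KC) : ℝ := A.hi - A.lo

end KC

/-- `Conv H`: continuous `[0,1]`-valued functions `φ` with `φf + (1-φ)g ∈ H` for all `f,g ∈ H`. -/
def Conv {K : Type*} [TopologicalSpace K] (H : Set C(K, KC)) : Set C(K, ℝ) :=
  {φ | (∀ k, φ k ∈ Set.Icc (0:ℝ) 1) ∧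
    ∀ f ∈ H, ∀ g ∈ H, ∃ h ∈ H, ∀ k, h k = φ k • f k + (1 - φ k) • g k}

lemma KC.smul_lo {c : ℝ} (hc : 0 ≤ c) (A : KC) : (c • A).lo = c * A.lo :=
  min_eq_left (mul_le_mul_of_nonneg_left A.isLe hc)

lemma KC.smul_hi {c : ℝ} (hc : 0 ≤ c) (A : KC) : (c • A).hi = c * A.hi :=
  max_eq_right (mul_le_mul_of_nonneg_left A.isLe hc)

theorem conv_mul_mem {K : Type*} [TopologicalSpace K] [CompactSpace K] [T2Space K]
    (H : Set C(K, KC)) (hne : H.Nonempty) (φ ψ : C(K, ℝ))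
    (hφ : φ ∈ Conv H) (hψ : ψ ∈ Conv H) :
    φ * ψ ∈ Conv H := by
  obtain ⟨hφ1, hφ2⟩ := hφ
  obtain ⟨hψ1, hψ2⟩ := hψ
  constructor
  · intro k
    have h1 := hφ1 k; have h2 := hψ1 k
    simp only [Set.mem_Icc] at *
    constructor
    · exact mul_nonneg h1.1 h2.1
    · calc φ k * ψ k ≤ 1 * 1 := mul_le_mul h1.2 h2.2 h2.1 zero_le_one
        _ = 1 := one_mul 1
  · intro f hf g hg
    obtain ⟨h1, hh1, heq1⟩ := hψ2 f hf g hg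
    obtain ⟨h2, hh2, heq2⟩ := hφ2 h1 hh1 g hg
    refine ⟨h2, hh2, fun k => ?_⟩
    have hφk := hφ1 k; have hψk := hψ1 k
    simp only [Set.mem_Icc] at hφk hψk
    have hφn := hφk.1
    have hψn := hψk.1
    have h1φ : (0:ℝ) ≤ 1 - φ k := by linarith [hφk.2]
    have h1ψ : (0:ℝ) ≤ 1 - ψ k := by linarith [hψk.2]
    have hmn : (0:ℝ) ≤ φ k * ψ k := mul_nonneg hφn hψn
    have h1mn : (0:ℝ) ≤ 1 - φ k * ψ k := by nlinarith
    rw [heq2 k, heq1 k]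
    have hadd_lo : ∀ A B : KC, (A + B).lo = A.lo + B.lo := fun A B => rfl
    have hadd_hi : ∀ A B : KC, (A + B).hi = A.hi + B.hi := fun A B => rfl
    ext
    · simp only [ContinuousMap.mul_apply, hadd_lo, KC.smul_lo hφn, KC.smul_lo hψn,
        KC.smul_lo h1φ, KC.smul_lo h1ψ, KC.smul_lo hmn, KC.smul_lo h1mn]
      ring
    · simp only [ContinuousMap.mul_apply, hadd_hi, KC.smul_hi hφn, KC.smul_hi hψn,
        KC.smul_hi h1φ, KC.smul_hi h1ψ, KC.smul_hi hmn, KC.smul_hi h1mn]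
      ring
end

section
/- For every 0 ≤ a < b ≤ 1 and every 0 < δ < 1/2, there exist natural numbers m, n such that the polynomial p(x) = (1 − x^m)^n satisfies p(x) > 1 − δ for all x ∈ [0,a] and p(x) < δ for all x ∈ [b,1]. -/
lemma bump_key {t : ℝ} (h0 : 0 ≤ t) (h1 : t ≤ 1) (n : ℕ) :
    (1 - t) ^ n * (1 + n * t) ≤ 1 := by
  have h2 : 1 + (n : ℝ) * t ≤ (1 + t) ^ n :=
    one_add_mul_le_pow (by linarith : (-2:ℝ) ≤ t) n
  calc (1 - t) ^ n * (1 + n * t) ≤ (1 - t) ^ n * (1 + t) ^ n :=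
        mul_le_mul_of_nonneg_left h2 (pow_nonneg (by linarith) n)
    _ = (1 - t ^ 2) ^ n := by rw [← mul_pow]; ring_nf
    _ ≤ 1 := pow_le_one₀ (by nlinarith) (by nlinarith)

theorem exists_polynomial_bump (a b δ : ℝ) (ha : 0 ≤ a) (hab : a < b) (hb : b ≤ 1)
    (hδ0 : 0 < δ) (hδ : δ < 1/2) :
    ∃ m n : ℕ, (∀ x ∈ Set.Icc (0:ℝ) a, 1 - δ < (1 - x ^ m) ^ n) ∧
      (∀ x ∈ Set.Icc b 1, (1 - x ^ m) ^ n < δ) := by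
  have hb0 : 0 < b := lt_of_le_of_lt ha hab
  have ha1 : a < 1 := lt_of_lt_of_le hab hb
  have hr1 : max (a / b) a < 1 := max_lt ((div_lt_one hb0).mpr hab) ha1
  have hr0 : 0 ≤ max (a / b) a := le_trans ha (le_max_right _ _)
  obtain ⟨m, hm⟩ := exists_pow_lt_of_lt_one (show (0:ℝ) < δ ^ 2 / 4 by positivity) hr1
  have habm : (a / b) ^ m ≤ (max (a / b) a) ^ m :=
    pow_le_pow_left₀ (by positivity) (le_max_left _ _) m
  have ham : a ^ m ≤ (max (a / b) a) ^ m := pow_le_pow_left₀ ha (le_max_right _ _) m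
  have hbm : 0 < b ^ m := pow_pos hb0 m
  have hbm1 : b ^ m ≤ 1 := pow_le_one₀ (le_of_lt hb0) hb
  have ham1 : a ^ m ≤ 1 := pow_le_one₀ ha ha1.le
  set n : ℕ := ⌈1 / (δ * b ^ m)⌉₊ + 1 with hn
  have hx0 : (0:ℝ) ≤ 1 / (δ * b ^ m) := by positivity
  have hnlb : 1 / (δ * b ^ m) < (n : ℝ) := by
    have := Nat.le_ceil (1 / (δ * b ^ m))
    push_cast [hn]
    linarith
  have hnub : (n : ℝ) ≤ 1 / (δ * b ^ m) + 2 := by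
    have := Nat.ceil_lt_add_one hx0
    push_cast [hn]
    linarith
  clear_value n
  clear hn
  -- n * a^m < δ
  have hkey : (n : ℝ) * a ^ m < δ := by
    have h1 : (a / b) ^ m < δ ^ 2 / 4 := lt_of_le_of_lt habm hm
    have h2 : a ^ m < δ ^ 2 / 4 := lt_of_le_of_lt ham hm
    have h3 : a ^ m / b ^ m < δ ^ 2 / 4 := by rwa [← div_pow]
    have h4 : a ^ m / (δ * b ^ m) < δ / 4 := by
      rw [div_lt_iff₀ (by positivity)] at h3 ⊢
      nlinarith
    have h5 : (n : ℝ) * a ^ m ≤ (1 / (δ * b ^ m) + 2) * a ^ m :=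
      mul_le_mul_of_nonneg_right hnub (by positivity)
    have h6 : (1 / (δ * b ^ m)) * a ^ m = a ^ m / (δ * b ^ m) := by ring
    nlinarith
  refine ⟨m, n, ?_, ?_⟩
  · intro x hx
    obtain ⟨hx0', hx1⟩ := hx
    have hxm : x ^ m ≤ a ^ m := pow_le_pow_left₀ hx0' hx1 m
    have h7 : (1 - a ^ m) ^ n ≤ (1 - x ^ m) ^ n :=
      pow_le_pow_left₀ (by linarith) (by linarith) n
    have h8 : 1 + (n : ℝ) * (-(a ^ m)) ≤ (1 + (-(a ^ m))) ^ n :=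
      one_add_mul_le_pow (by linarith : (-2:ℝ) ≤ -(a ^ m)) n
    have h9 : (1 + (-(a ^ m))) ^ n = (1 - a ^ m) ^ n := by ring_nf
    nlinarith
  · intro x hx
    obtain ⟨hxb, hx1⟩ := hx
    have hx0' : 0 ≤ x := le_trans hb0.le hxb
    have hxm : b ^ m ≤ x ^ m := pow_le_pow_left₀ hb0.le hxb m
    have hxm1 : x ^ m ≤ 1 := pow_le_one₀ hx0' hx1
    have h7 : (1 - x ^ m) ^ n ≤ (1 - b ^ m) ^ n :=
      pow_le_pow_left₀ (by linarith) (by linarith) n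
    have h8 : (1 - b ^ m) ^ n * (1 + n * b ^ m) ≤ 1 := bump_key hbm.le hbm1 n
    have h9 : 1 / δ < (n : ℝ) * b ^ m := by
      rw [div_lt_iff₀ hδ0, mul_comm]
      rw [div_lt_iff₀ (by positivity)] at hnlb
      nlinarith
    have h10 : (0:ℝ) < 1 + (n:ℝ) * b ^ m := by positivity
    have h12 : 1 < δ * (1 + (n:ℝ) * b ^ m) := by
      rw [div_lt_iff₀ hδ0] at h9
      nlinarith [h9, hδ0]
    have hA : (1 - b ^ m) ^ n ≤ 1 / (1 + (n:ℝ) * b ^ m) :=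
      (le_div_iff₀ h10).mpr h8
    have hB : 1 / (1 + (n:ℝ) * b ^ m) < δ := by
      rw [div_lt_iff₀ h10]
      linarith [mul_comm δ (1 + (n:ℝ) * b ^ m) ▸ h12]
    linarith
end

section
/- Let K be a compact Hausdorff space and H ⊆ C(K, K_C) nonempty. If φ, ψ ∈ Conv(H), then the pointwise maximum φ ∨ ψ lies in the uniform closure of Conv(H) in C(K,[0,1]). -/
/-!
Write `max x y = c x + (1 - c) y` with `c` the indicator of `{x > y}`; it suffices to find
`c ∈ Conv H` that is uniformly close to that indicator away from the diagonal. Since `Conv H`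
contains `0`, `1` and is closed under `(χ, a, b) ↦ χ a + (1 - χ) b`, it is closed under every
iteration of such expressions. Iterating `c ↦ φ (ψ c + 1 - ψ) + (1 - φ)(1 - ψ) c` from `0`
approaches `φ (1 - ψ) / (φ (1 - ψ) + (1 - φ) ψ)`, which lies on the correct side of `1/2`, and
iterating the smoothstep `c ↦ 3c² - 2c³ = c (c + (1 - c) c) + (1 - c) c²` then pushes it to
`0` or `1`.
-/

open Set Filter

namespace KC

lemma smul_lo_of_nonneg {c : ℝ} (hc : 0 ≤ c) (A : KC) : (c • A).lo = c * A.lo :=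
  min_eq_left (mul_le_mul_of_nonneg_left A.isLe hc)

lemma smul_hi_of_nonneg {c : ℝ} (hc : 0 ≤ c) (A : KC) : (c • A).hi = c * A.hi :=
  max_eq_right (mul_le_mul_of_nonneg_left A.isLe hc)

lemma add_lo (A B : KC) : (A + B).lo = A.lo + B.lo := rfl

lemma add_hi (A B : KC) : (A + B).hi = A.hi + B.hi := rfl

variable {α β γ : ℝ}

lemma convexComb_lo (hα : α ∈ Icc (0 : ℝ) 1) (F G : KC) :
    (α • F + (1 - α) • G).lo = α * F.lo + (1 - α) * G.lo := by
  rw [add_lo, smul_lo_of_nonneg hα.1, smul_lo_of_nonneg (sub_nonneg.2 hα.2)]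

lemma convexComb_hi (hα : α ∈ Icc (0 : ℝ) 1) (F G : KC) :
    (α • F + (1 - α) • G).hi = α * F.hi + (1 - α) * G.hi := by
  rw [add_hi, smul_hi_of_nonneg hα.1, smul_hi_of_nonneg (sub_nonneg.2 hα.2)]

lemma zero_convexComb (F G : KC) : (0 : ℝ) • F + (1 - (0 : ℝ)) • G = G := by
  ext
  · rw [convexComb_lo (by norm_num)]; ring
  · rw [convexComb_hi (by norm_num)]; ring

lemma one_convexComb (F G : KC) : (1 : ℝ) • F + (1 - (1 : ℝ)) • G = F := by
  ext
  · rw [convexComb_lo (by norm_num)]; ring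
  · rw [convexComb_hi (by norm_num)]; ring

lemma convexComb_convexComb (hα : α ∈ Icc (0 : ℝ) 1) (hβ : β ∈ Icc (0 : ℝ) 1)
    (hγ : γ ∈ Icc (0 : ℝ) 1) (F G : KC) :
    α • (β • F + (1 - β) • G) + (1 - α) • (γ • F + (1 - γ) • G)
      = (α * β + (1 - α) * γ) • F + (1 - (α * β + (1 - α) * γ)) • G := by
  have hw : α * β + (1 - α) * γ ∈ Icc (0 : ℝ) 1 :=
    ⟨by nlinarith [hα.1, hα.2, hβ.1, hγ.1], by nlinarith [hα.1, hα.2, hβ.2, hγ.2]⟩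
  ext
  · simp only [convexComb_lo hw, convexComb_lo hα, convexComb_lo hβ, convexComb_lo hγ]; ring
  · simp only [convexComb_hi hw, convexComb_hi hα, convexComb_hi hβ, convexComb_hi hγ]; ring

end KC

structure IsMixClosed {K : Type*} [TopologicalSpace K] (S : Set C(K, ℝ)) : Prop where
  mem_Icc : ∀ {c}, c ∈ S → ∀ k, c k ∈ Icc (0 : ℝ) 1
  zero_mem : 0 ∈ S
  one_mem : 1 ∈ S
  mix_mem : ∀ {χ a b}, χ ∈ S → a ∈ S → b ∈ S → χ * a + (1 - χ) * b ∈ S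

lemma isMixClosed_conv {K : Type*} [TopologicalSpace K] (H : Set C(K, KC)) :
    IsMixClosed (Conv H) where
  mem_Icc hc := hc.1
  zero_mem := ⟨fun _ => by simp, fun _ _ g hg => ⟨g, hg, fun _ => (KC.zero_convexComb _ _).symm⟩⟩
  one_mem := ⟨fun _ => by simp, fun f hf _ _ => ⟨f, hf, fun _ => (KC.one_convexComb _ _).symm⟩⟩
  mix_mem := by
    rintro χ a b ⟨hχ01, hχ⟩ ⟨ha01, ha⟩ ⟨hb01, hb⟩
    refine ⟨fun k => ?_, fun f hf g hg => ?_⟩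
    · obtain ⟨hχ0, hχ1⟩ := hχ01 k
      obtain ⟨ha0, ha1⟩ := ha01 k
      obtain ⟨hb0, hb1⟩ := hb01 k
      simp only [ContinuousMap.add_apply, ContinuousMap.mul_apply, ContinuousMap.sub_apply,
        ContinuousMap.one_apply, mem_Icc]
      constructor <;> nlinarith
    · obtain ⟨fa, hfa, hfa_eq⟩ := ha f hf g hg
      obtain ⟨fb, hfb, hfb_eq⟩ := hb f hf g hg
      obtain ⟨h, hh, hh_eq⟩ := hχ fa hfa fb hfb
      refine ⟨h, hh, fun k => ?_⟩
      rw [hh_eq, hfa_eq, hfb_eq, KC.convexComb_convexComb (hχ01 k) (ha01 k) (hb01 k)]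
      simp

/-- The probability that, in `N` rounds of independent coin flips with biases `x` and `y`, some
round shows (heads, tails) before any round shows (tails, heads). As `N → ∞` it tends to
`x (1 - y) / (x (1 - y) + (1 - x) y)`, which exceeds `1/2` exactly when `x > y`. -/
noncomputable def duel (x y : ℝ) (N : ℕ) : ℝ :=
  (fun t => x * (1 - y) + (x * y + (1 - x) * (1 - y)) * t)^[N] 0

lemma mul_duel (x y : ℝ) (N : ℕ) :
    (x * (1 - y) + (1 - x) * y) * duel x y N
      = x * (1 - y) * (1 - (x * y + (1 - x) * (1 - y)) ^ N) := by
  induction N with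
  | zero => simp [duel]
  | succ n ih =>
    rw [duel, Function.iterate_succ_apply', ← duel, pow_succ]
    linear_combination (x * y + (1 - x) * (1 - y)) * ih

lemma le_half_sub_of_mul_le {p q v e δ : ℝ} (hp : 0 ≤ p) (hq : 0 ≤ q) (hpq : p + q ≤ 1)
    (hv : (p + q) * v ≤ p + e) (he : e < δ / 4) (hδ₀ : 0 ≤ δ) (hδ : δ ≤ q - p) :
    v ≤ 1 / 2 - δ / 4 := by
  by_contra! hlt
  have h₁ : (p + q) * (1 / 2 - δ / 4) ≤ (p + q) * v := by gcongr
  have h₂ : (p + q) * δ ≤ δ := mul_le_of_le_one_left hδ₀ hpq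
  linarith

variable {x y δ : ℝ}

lemma duel_le (hx : x ∈ Icc (0 : ℝ) 1) (hy : y ∈ Icc (0 : ℝ) 1) (hδ : 0 < δ) (hyx : δ ≤ y - x)
    (N : ℕ) : duel x y N ≤ 1 / 2 - δ / 4 := by
  obtain ⟨hx0, hx1⟩ := hx
  obtain ⟨hy0, hy1⟩ := hy
  have hκ : 0 ≤ (x * y + (1 - x) * (1 - y)) ^ N := pow_nonneg (by nlinarith) N
  refine le_half_sub_of_mul_le (p := x * (1 - y)) (q := (1 - x) * y) (e := 0)
    (by positivity) (by nlinarith) (by nlinarith) ?_ (by linarith) hδ.le (hyx.trans_eq (by ring))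
  rw [mul_duel]
  nlinarith [mul_nonneg (mul_nonneg hx0 (sub_nonneg.2 hy1)) hκ]

lemma one_sub_duel_le (hx : x ∈ Icc (0 : ℝ) 1) (hy : y ∈ Icc (0 : ℝ) 1) (hδ : 0 < δ) {N : ℕ}
    (hN : (1 - δ) ^ N < δ / 4) (hxy : δ ≤ x - y) : 1 - duel x y N ≤ 1 / 2 - δ / 4 := by
  obtain ⟨hx0, hx1⟩ := hx
  obtain ⟨hy0, hy1⟩ := hy
  have hκN : (x * y + (1 - x) * (1 - y)) ^ N ≤ (1 - δ) ^ N :=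
    pow_le_pow_left₀ (by nlinarith) (by nlinarith) N
  refine le_half_sub_of_mul_le (p := (1 - x) * y) (q := x * (1 - y))
    (e := x * (1 - y) * (x * y + (1 - x) * (1 - y)) ^ N)
    (by nlinarith) (by nlinarith) (by nlinarith) ?_ ?_ hδ.le (by linarith)
  · linarith [mul_duel x y N]
  · calc x * (1 - y) * (x * y + (1 - x) * (1 - y)) ^ N ≤ 1 * (1 - δ) ^ N := by
          gcongr; nlinarith
      _ < δ / 4 := by linarith

noncomputable def smoothstep (t : ℝ) : ℝ := 3 * t ^ 2 - 2 * t ^ 3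

lemma smoothstep_iterate_one_sub (M : ℕ) (t : ℝ) :
    smoothstep^[M] (1 - t) = 1 - smoothstep^[M] t :=
  (Function.Semiconj.iterate_right (f := fun t => 1 - t)
    (fun t => by simp only [smoothstep]; ring) M t).symm

variable {η t : ℝ}

lemma smoothstep_le (hη : 0 < η) (ht₀ : 0 ≤ t) (ht : t ≤ 1 / 2 - η) :
    smoothstep t ≤ (1 - η) * t := by
  have h : t * (3 - 2 * t) ≤ 1 - η := by nlinarith
  unfold smoothstep
  nlinarith [mul_le_mul_of_nonneg_left h ht₀]

lemma smoothstep_iterate_le (hη : 0 < η) (ht₀ : 0 ≤ t) (ht : t ≤ 1 / 2 - η) (M : ℕ) :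
    smoothstep^[M] t ≤ (1 - η) ^ M * t := by
  induction M generalizing t with
  | zero => simp
  | succ n ih =>
    have hs := smoothstep_le hη ht₀ ht
    have hs₀ : 0 ≤ smoothstep t := by unfold smoothstep; nlinarith [pow_two_nonneg t]
    rw [Function.iterate_succ_apply, pow_succ, mul_assoc]
    calc smoothstep^[n] (smoothstep t) ≤ (1 - η) ^ n * smoothstep t :=
          ih hs₀ (by nlinarith)
      _ ≤ (1 - η) ^ n * ((1 - η) * t) := by gcongr; exact pow_nonneg (by linarith) n

lemma abs_max_sub_convexComb_le {x y c δ : ℝ} (hx : x ∈ Icc (0 : ℝ) 1) (hy : y ∈ Icc (0 : ℝ) 1)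
    (hc : c ∈ Icc (0 : ℝ) 1) (hδ : 0 ≤ δ) (hxy : δ ≤ x - y → 1 - c ≤ δ)
    (hyx : δ ≤ y - x → c ≤ δ) : |max x y - (c * x + (1 - c) * y)| ≤ δ := by
  obtain ⟨hc₀, hc₁⟩ := hc
  rcases le_total y x with hle | hle
  · rw [max_eq_left hle, show x - (c * x + (1 - c) * y) = (1 - c) * (x - y) by ring,
      abs_of_nonneg (by nlinarith)]
    by_cases hδxy : δ ≤ x - y
    · nlinarith [hxy hδxy, hx.2, hy.1]
    · nlinarith
  · rw [max_eq_right hle, show y - (c * x + (1 - c) * y) = c * (y - x) by ring,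
      abs_of_nonneg (by nlinarith)]
    by_cases hδyx : δ ≤ y - x
    · nlinarith [hyx hδyx, hy.2, hx.1]
    · nlinarith

lemma ContinuousMap.mem_closure_of_forall_exists_dist_le {X Y : Type*} [TopologicalSpace X]
    [PseudoMetricSpace Y] {S : Set C(X, Y)} {f : C(X, Y)}
    (h : ∀ ε > 0, ∃ g ∈ S, ∀ x, dist (f x) (g x) ≤ ε) : f ∈ closure S := by
  choose g hgS hg using fun n : ℕ => h (1 / (n + 1)) Nat.one_div_pos_of_nat
  refine mem_closure_of_tendsto (f := g) (b := atTop)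
    (ContinuousMap.tendsto_of_tendstoLocallyUniformly ?_) (Eventually.of_forall hgS)
  refine (Metric.tendstoUniformly_iff.2 fun ε hε => ?_).tendstoLocallyUniformly
  obtain ⟨N, hN⟩ := exists_nat_one_div_lt hε
  filter_upwards [eventually_ge_atTop N] with n hn x
  calc dist (f x) (g n x) ≤ 1 / (n + 1) := hg n x
    _ ≤ 1 / (N + 1) := Nat.one_div_le_one_div hn
    _ < ε := hN

lemma exists_mem_iterate {X Y : Type*} [TopologicalSpace X] [TopologicalSpace Y]
    {S : Set C(X, Y)} {g : X → Y → Y} (hg : ∀ c ∈ S, ∃ c' ∈ S, ∀ x, c' x = g x (c x))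
    {c : C(X, Y)} (hc : c ∈ S) (n : ℕ) : ∃ c' ∈ S, ∀ x, c' x = (g x)^[n] (c x) := by
  induction n with
  | zero => exact ⟨c, hc, fun _ => rfl⟩
  | succ n ih =>
    obtain ⟨cₙ, hcₙ, hcₙ_eq⟩ := ih
    obtain ⟨c', hc', hc'_eq⟩ := hg cₙ hcₙ
    exact ⟨c', hc', fun x => by rw [hc'_eq, hcₙ_eq, Function.iterate_succ_apply']⟩

namespace IsMixClosed

variable {K : Type*} [TopologicalSpace K] {S : Set C(K, ℝ)}

lemma exists_mem_duel (hS : IsMixClosed S) {φ ψ : C(K, ℝ)} (hφ : φ ∈ S) (hψ : ψ ∈ S) (N : ℕ) :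
    ∃ u ∈ S, ∀ k, u k = duel (φ k) (ψ k) N := by
  refine exists_mem_iterate (fun c hc => ?_) hS.zero_mem N
  refine ⟨φ * (ψ * c + (1 - ψ) * 1) + (1 - φ) * (ψ * 0 + (1 - ψ) * c),
    hS.mix_mem hφ (hS.mix_mem hψ hc hS.one_mem) (hS.mix_mem hψ hS.zero_mem hc), fun k => ?_⟩
  simp only [ContinuousMap.add_apply, ContinuousMap.mul_apply, ContinuousMap.sub_apply,
    ContinuousMap.one_apply, ContinuousMap.zero_apply]
  ring

lemma exists_mem_smoothstep_iterate (hS : IsMixClosed S) {u : C(K, ℝ)} (hu : u ∈ S) (M : ℕ) :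
    ∃ c ∈ S, ∀ k, c k = smoothstep^[M] (u k) := by
  refine exists_mem_iterate (g := fun _ => smoothstep) (fun c hc => ?_) hu M
  refine ⟨c * (c * 1 + (1 - c) * c) + (1 - c) * (c * c + (1 - c) * 0),
    hS.mix_mem hc (hS.mix_mem hc hS.one_mem hc) (hS.mix_mem hc hc hS.zero_mem), fun k => ?_⟩
  simp only [ContinuousMap.add_apply, ContinuousMap.mul_apply, ContinuousMap.sub_apply,
    ContinuousMap.one_apply, ContinuousMap.zero_apply, smoothstep]
  ring

lemma exists_mem_dist_sup_le (hS : IsMixClosed S) {φ ψ : C(K, ℝ)} (hφ : φ ∈ S) (hψ : ψ ∈ S)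
    {δ : ℝ} (hδ : 0 < δ) :
    ∃ F ∈ S, ∀ k, dist ((φ ⊔ ψ) k) (F k) ≤ δ := by
  obtain ⟨N, hN⟩ := exists_pow_lt_of_lt_one (by positivity : 0 < δ / 4) (by linarith : 1 - δ < 1)
  obtain ⟨M, hM⟩ := exists_pow_lt_of_lt_one hδ (by linarith : 1 - δ / 4 < 1)
  obtain ⟨u, hu, hu_eq⟩ := hS.exists_mem_duel hφ hψ N
  obtain ⟨c, hc, hc_eq⟩ := hS.exists_mem_smoothstep_iterate hu M
  have hsharp : ∀ t, 0 ≤ t → t ≤ 1 / 2 - δ / 4 → smoothstep^[M] t ≤ δ := fun t ht₀ ht =>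
    calc smoothstep^[M] t ≤ (1 - δ / 4) ^ M * t := smoothstep_iterate_le (by positivity) ht₀ ht M
      _ ≤ (1 - δ / 4) ^ M * 1 :=
          mul_le_mul_of_nonneg_left (by linarith) (pow_nonneg (by linarith) M)
      _ ≤ δ := by linarith
  refine ⟨c * φ + (1 - c) * ψ, hS.mix_mem hc hφ hψ, fun k => ?_⟩
  have hu₀₁ := hS.mem_Icc hu k
  rw [hu_eq] at hu₀₁
  simp only [ContinuousMap.sup_apply, ContinuousMap.add_apply, ContinuousMap.mul_apply,
    ContinuousMap.sub_apply, ContinuousMap.one_apply, Real.dist_eq]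
  refine abs_max_sub_convexComb_le (hS.mem_Icc hφ k) (hS.mem_Icc hψ k) (hS.mem_Icc hc k) hδ.le
    (fun hxy => ?_) (fun hyx => ?_)
  · rw [hc_eq, hu_eq, ← smoothstep_iterate_one_sub]
    exact hsharp _ (by linarith [hu₀₁.2])
      (one_sub_duel_le (hS.mem_Icc hφ k) (hS.mem_Icc hψ k) hδ hN hxy)
  · rw [hc_eq, hu_eq]
    exact hsharp _ hu₀₁.1 (duel_le (hS.mem_Icc hφ k) (hS.mem_Icc hψ k) hδ hyx N)

lemma sup_mem_closure (hS : IsMixClosed S) {φ ψ : C(K, ℝ)} (hφ : φ ∈ S) (hψ : ψ ∈ S) :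
    φ ⊔ ψ ∈ closure S :=
  ContinuousMap.mem_closure_of_forall_exists_dist_le fun _ hδ =>
    hS.exists_mem_dist_sup_le hφ hψ hδ

end IsMixClosed

theorem conv_sup_mem_closure_general {K : Type*} [TopologicalSpace K]
    (H : Set C(K, KC)) (φ ψ : C(K, ℝ))
    (hφ : φ ∈ Conv H) (hψ : ψ ∈ Conv H) :
    φ ⊔ ψ ∈ closure (Conv H) :=
  (isMixClosed_conv H).sup_mem_closure hφ hψ

theorem conv_sup_mem_closure {K : Type*} [TopologicalSpace K] [CompactSpace K] [T2Space K]
    (H : Set C(K, KC)) (hne : H.Nonempty) (φ ψ : C(K, ℝ))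
    (hφ : φ ∈ Conv H) (hψ : ψ ∈ Conv H) :
    φ ⊔ ψ ∈ closure (Conv H) :=
  conv_sup_mem_closure_general H φ ψ hφ hψ
end

section
/- Let K be a compact Hausdorff space, f : K → K_C continuous, and ε > 0. Then there exist finitely many continuous functions ψ_1,...,ψ_m : K → [0,1] and intervals J_1,...,J_m ∈ K_C such that sup_{x∈K} d_H(f(x), ψ_1(x)J_1 + ... + ψ_m(x)J_m) < ε, where ψ_i(x)J_i is the scalar multiple of the interval J_i and the sum is the Minkowski sum. -/
namespace KCAux

open KC

lemma dist_def (A B : KC) : dist A B = max |A.lo - B.lo| |A.hi - B.hi| := rfl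

def loHom : KC →+ ℝ := { toFun := KC.lo, map_zero' := rfl, map_add' := fun _ _ => rfl }
def hiHom : KC →+ ℝ := { toFun := KC.hi, map_zero' := rfl, map_add' := fun _ _ => rfl }

lemma smul_lo (c : ℝ) (hc : 0 ≤ c) (A : KC) : (c • A).lo = c * A.lo :=
  min_eq_left (mul_le_mul_of_nonneg_left A.isLe hc)

lemma smul_hi (c : ℝ) (hc : 0 ≤ c) (A : KC) : (c • A).hi = c * A.hi :=
  max_eq_right (mul_le_mul_of_nonneg_left A.isLe hc)

lemma key {m : ℕ} (A : KC) (B : Fin m → KC) (lam : Fin m → ℝ)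
    (h0 : ∀ i, 0 ≤ lam i) (h1 : ∑ i, lam i = 1) (δ : ℝ)
    (hd : ∀ i, lam i ≠ 0 → dist A (B i) ≤ δ) :
    dist A (∑ i, lam i • B i) ≤ δ := by
  have hboundlo : ∀ i, lam i * |A.lo - (B i).lo| ≤ lam i * δ := by
    intro i
    rcases eq_or_ne (lam i) 0 with h | h
    · simp [h]
    · refine mul_le_mul_of_nonneg_left ?_ (h0 i)
      exact le_trans (le_trans (le_max_left _ _) (le_of_eq (dist_def A (B i)).symm)) (hd i h)
  have hboundhi : ∀ i, lam i * |A.hi - (B i).hi| ≤ lam i * δ := by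
    intro i
    rcases eq_or_ne (lam i) 0 with h | h
    · simp [h]
    · refine mul_le_mul_of_nonneg_left ?_ (h0 i)
      exact le_trans (le_trans (le_max_right _ _) (le_of_eq (dist_def A (B i)).symm)) (hd i h)
  have hlo : (∑ i, lam i • B i).lo = ∑ i, lam i * (B i).lo := by
    have := map_sum loHom (fun i => lam i • B i) Finset.univ
    simp only [loHom, AddMonoidHom.coe_mk, ZeroHom.coe_mk] at this
    rw [this]
    exact Finset.sum_congr rfl fun i _ => smul_lo _ (h0 i) _
  have hhi : (∑ i, lam i • B i).hi = ∑ i, lam i * (B i).hi := by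
    have := map_sum hiHom (fun i => lam i • B i) Finset.univ
    simp only [hiHom, AddMonoidHom.coe_mk, ZeroHom.coe_mk] at this
    rw [this]
    exact Finset.sum_congr rfl fun i _ => smul_hi _ (h0 i) _
  rw [dist_def, hlo, hhi]
  have hsum : ∀ (g : Fin m → ℝ), |A.lo * 1 - A.lo * 1| = 0 := by intro g; simp
  apply max_le
  · have : A.lo - ∑ i, lam i * (B i).lo = ∑ i, lam i * (A.lo - (B i).lo) := by
      simp only [mul_sub, Finset.sum_sub_distrib, ← Finset.sum_mul, h1, one_mul]
    rw [this]
    calc |∑ i, lam i * (A.lo - (B i).lo)| ≤ ∑ i, |lam i * (A.lo - (B i).lo)| :=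
          Finset.abs_sum_le_sum_abs _ _
      _ = ∑ i, lam i * |A.lo - (B i).lo| := by
          refine Finset.sum_congr rfl fun i _ => ?_
          rw [abs_mul, abs_of_nonneg (h0 i)]
      _ ≤ ∑ i, lam i * δ := Finset.sum_le_sum fun i _ => hboundlo i
      _ = δ := by rw [← Finset.sum_mul, h1, one_mul]
  · have : A.hi - ∑ i, lam i * (B i).hi = ∑ i, lam i * (A.hi - (B i).hi) := by
      simp only [mul_sub, Finset.sum_sub_distrib, ← Finset.sum_mul, h1, one_mul]
    rw [this]
    calc |∑ i, lam i * (A.hi - (B i).hi)| ≤ ∑ i, |lam i * (A.hi - (B i).hi)| :=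
          Finset.abs_sum_le_sum_abs _ _
      _ = ∑ i, lam i * |A.hi - (B i).hi| := by
          refine Finset.sum_congr rfl fun i _ => ?_
          rw [abs_mul, abs_of_nonneg (h0 i)]
      _ ≤ ∑ i, lam i * δ := Finset.sum_le_sum fun i _ => hboundhi i
      _ = δ := by rw [← Finset.sum_mul, h1, one_mul]

end KCAux

theorem approx_by_convex_combinations {K : Type*} [TopologicalSpace K] [CompactSpace K]
    [T2Space K] (f : C(K, KC)) (ε : ℝ) (hε : 0 < ε) :
    ∃ (m : ℕ) (ψ : Fin m → C(K, ℝ)) (J : Fin m → KC),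
      (∀ i x, ψ i x ∈ Set.Icc (0:ℝ) 1) ∧
      ∀ x, dist (f x) (∑ i, ψ i x • J i) < ε := by
  -- open cover by sets where f varies less than ε/2
  set U : K → Set K := fun y => {x | dist (f x) (f y) < ε / 2} with hU
  have hUopen : ∀ y, IsOpen (U y) := by
    intro y
    have : Continuous fun x => dist (f x) (f y) := f.continuous.dist continuous_const
    exact isOpen_lt this continuous_const
  have hmem : ∀ x : K, x ∈ U x := by
    intro x; simp [hU]; positivity
  obtain ⟨s, hs⟩ := isCompact_univ.elim_finite_subcover U hUopen
    (fun x _ => Set.mem_iUnion.2 ⟨x, hmem x⟩)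
  have hcov : (Set.univ : Set K) ⊆ ⋃ y : s, U y := by
    intro x hx
    obtain ⟨y, hy, hxy⟩ := Set.mem_iUnion₂.1 (hs hx)
    exact Set.mem_iUnion.2 ⟨⟨y, hy⟩, hxy⟩
  obtain ⟨p, hp⟩ := PartitionOfUnity.exists_isSubordinate isClosed_univ
    (fun y : s => U y) (fun y => hUopen y) hcov
  set m := s.card with hm
  set e : Fin m ≃ ↥s := s.equivFin.symm with he
  refine ⟨m, fun i => p (e i), fun i => f (e i : K), ?_, ?_⟩
  · intro i x
    exact ⟨p.nonneg _ _, p.le_one _ _⟩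
  · intro x
    have hsum1 : ∑ i, p (e i) x = 1 := by
      rw [Equiv.sum_comp e (fun j => p j x)]
      have := p.sum_eq_one (Set.mem_univ x)
      rwa [finsum_eq_sum_of_fintype] at this
    have := KCAux.key (f x) (fun i => f (e i : K)) (fun i => p (e i) x)
      (fun i => p.nonneg _ _) hsum1 (ε / 2) ?_
    · linarith
    · intro i hi
      have hx : x ∈ U (e i : K) := hp (e i) (subset_tsupport _ hi)
      exact le_of_lt hx
end

section
/- Let f : [0,1] → K_C be continuous with non-increasing length function (len(f)(x) = f(x)⁺ − f(x)⁻ satisfies len(f)(x) ≥ len(f)(y) whenever x ≤ y). Then for every n ∈ ℕ, the approximation error E_{n,f} = inf over g ∈ T_n of sup_{x∈[0,1]} d_H(f(x), g(x)) satisfies E_{n,f} ≤ 2·ω(f, 1/n), where T_n is the set of functions of the form ∑_{i=0}^n ψ_i(x)A_i with ψ_i : [0,1] → [0,1] continuous and A_i ∈ K_C, and ω(f,δ) = sup{d_H(f(x),f(y)) : x,y ∈ [0,1], |x−y| < δ} is the modulus of continuity. -/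
/-- Modulus of continuity of `f : [0,1] → K_C`. -/
noncomputable def omegaMod (f : C(Set.Icc (0:ℝ) 1, KC)) (δ : ℝ) : ℝ :=
  sSup {d | ∃ x y : Set.Icc (0:ℝ) 1, |(x:ℝ) - (y:ℝ)| < δ ∧ d = dist (f x) (f y)}

/-- The family `T_n` of functions `x ↦ ∑_{i=0}^n ψ_i(x) A_i`. -/
def Tn (n : ℕ) : Set (Set.Icc (0:ℝ) 1 → KC) :=
  {g | ∃ (ψ : Fin (n+1) → C(Set.Icc (0:ℝ) 1, ℝ)) (A : Fin (n+1) → KC),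
    (∀ i x, ψ i x ∈ Set.Icc (0:ℝ) 1) ∧ ∀ x, g x = ∑ i, ψ i x • A i}

/-- The approximation error `E_{n,f}`. -/
noncomputable def approxErr (n : ℕ) (f : C(Set.Icc (0:ℝ) 1, KC)) : ℝ :=
  sInf {e | ∃ g ∈ Tn n, e = ⨆ x, dist (f x) (g x)}

lemma KC.dist_def (A B : KC) : dist A B = max |A.lo - B.lo| |A.hi - B.hi| := rfl

noncomputable def KC.loHom : KC →+ ℝ := ⟨⟨KC.lo, rfl⟩, fun _ _ => rfl⟩
noncomputable def KC.hiHom : KC →+ ℝ := ⟨⟨KC.hi, rfl⟩, fun _ _ => rfl⟩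

lemma hat_sum (n : ℕ) (hn : 0 < n) (t : ℝ) (ht0 : 0 ≤ t) (htn : t ≤ n) :
    ∑ i : Fin (n + 1), max 0 (1 - |t - (i : ℕ)|) = 1 := by
  set j : ℕ := min ⌊t⌋₊ (n - 1) with hj
  have hjn : j < n := by omega
  have hjt : (j : ℝ) ≤ t := by
    have h1 : (j : ℝ) ≤ (⌊t⌋₊ : ℝ) := by exact_mod_cast Nat.cast_le.mpr (min_le_left _ _)
    exact h1.trans (Nat.floor_le ht0)
  have htj : t ≤ (j : ℝ) + 1 := by
    rcases le_or_gt (⌊t⌋₊) (n - 1) with h | h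
    · have : j = ⌊t⌋₊ := by omega
      rw [this]
      exact (Nat.lt_floor_add_one t).le
    · have : j = n - 1 := by omega
      rw [this]
      have : ((n - 1 : ℕ) : ℝ) + 1 = n := by
        have : (1:ℕ) ≤ n := hn
        push_cast [Nat.cast_sub this]
        ring
      rw [this]; exact htn
  set a : Fin (n + 1) := ⟨j, by omega⟩ with ha
  set b : Fin (n + 1) := ⟨j + 1, by omega⟩ with hb
  have hab : a ≠ b := by
    simp [ha, hb, Fin.ext_iff]
  have hsub : ({a, b} : Finset (Fin (n+1))) ⊆ Finset.univ := Finset.subset_univ _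
  rw [← Finset.sum_subset hsub]
  · rw [Finset.sum_pair hab]
    have h1 : |t - ((a : ℕ) : ℝ)| = t - j := by
      rw [abs_of_nonneg (by simp only [ha]; push_cast; linarith)]
    have h2 : |t - ((b : ℕ) : ℝ)| = (j : ℝ) + 1 - t := by
      rw [abs_of_nonpos (by push_cast [hb]; linarith)]
      push_cast [hb]; ring
    rw [h1, h2, max_eq_right (by linarith), max_eq_right (by linarith)]
    ring
  · intro i _ hi
    have hia : (i : ℕ) ≠ j := fun h => hi (by simp [ha, hb, Fin.ext_iff, h])
    have hib : (i : ℕ) ≠ j + 1 := fun h => hi (by simp [ha, hb, Fin.ext_iff, h])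
    have : (1 : ℝ) ≤ |t - (i : ℕ)| := by
      rcases lt_or_gt_of_ne hia with h | h
      · have : ((i : ℕ) : ℝ) + 1 ≤ j := by exact_mod_cast Nat.succ_le_of_lt h
        rw [abs_of_nonneg (by linarith)]; linarith
      · have : (j : ℝ) + 2 ≤ (i : ℕ) := by exact_mod_cast (by omega : j + 2 ≤ (i : ℕ))
        rw [abs_of_nonpos (by linarith)]; linarith
    exact max_eq_left (by linarith)

theorem jackson_nonincreasing (f : C(Set.Icc (0:ℝ) 1, KC))
    (hlen : ∀ x y : Set.Icc (0:ℝ) 1, (x:ℝ) ≤ (y:ℝ) → KC.len (f y) ≤ KC.len (f x))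
    (n : ℕ) (hn : 0 < n) :
    approxErr n f ≤ 2 * omegaMod f (1 / n) := by
  haveI : Nonempty (Set.Icc (0:ℝ) 1) := ⟨⟨0, by norm_num⟩⟩
  have hnR : (0:ℝ) < n := by exact_mod_cast hn
  set ω := omegaMod f (1 / n) with hω
  -- boundedness of the modulus set
  obtain ⟨C, hC⟩ : ∃ C, ∀ x y : Set.Icc (0:ℝ) 1, dist (f x) (f y) ≤ C := by
    have hb := (isCompact_range f.continuous).isBounded
    rw [Metric.isBounded_iff] at hb
    obtain ⟨C, hC⟩ := hb
    exact ⟨C, fun x y => hC ⟨x, rfl⟩ ⟨y, rfl⟩⟩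
  have hbdd : BddAbove {d | ∃ x y : Set.Icc (0:ℝ) 1,
      |(x:ℝ) - (y:ℝ)| < 1 / n ∧ d = dist (f x) (f y)} := by
    exact ⟨C, fun d ⟨x, y, _, hd⟩ => hd ▸ hC x y⟩
  have hω0 : 0 ≤ ω := by
    have : (0:ℝ) ∈ {d | ∃ x y : Set.Icc (0:ℝ) 1,
        |(x:ℝ) - (y:ℝ)| < 1 / n ∧ d = dist (f x) (f y)} := by
      refine ⟨⟨0, by norm_num⟩, ⟨0, by norm_num⟩, ?_, by simp⟩
      simp [one_div, inv_pos, hnR]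
    exact le_csSup hbdd this
  -- nodes
  have hnode : ∀ i : Fin (n + 1), ((i : ℕ) : ℝ) / n ∈ Set.Icc (0:ℝ) 1 := by
    intro i
    constructor
    · positivity
    · rw [div_le_one hnR]
      exact_mod_cast Nat.lt_succ_iff.mp i.isLt
  set node : Fin (n + 1) → Set.Icc (0:ℝ) 1 := fun i => ⟨((i : ℕ) : ℝ) / n, hnode i⟩
  -- hat functions
  set ψ : Fin (n + 1) → C(Set.Icc (0:ℝ) 1, ℝ) := fun i =>
    ⟨fun x => max 0 (1 - |(n : ℝ) * (x : ℝ) - (i : ℕ)|), by fun_prop⟩ with hψ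
  have hψ01 : ∀ i x, ψ i x ∈ Set.Icc (0:ℝ) 1 := by
    intro i x
    refine ⟨le_max_left _ _, max_le (by norm_num) ?_⟩
    have := abs_nonneg ((n : ℝ) * (x : ℝ) - (i : ℕ))
    linarith
  set A : Fin (n + 1) → KC := fun i => f (node i)
  set g : Set.Icc (0:ℝ) 1 → KC := fun x => ∑ i, ψ i x • A i with hg
  have hgT : g ∈ Tn n := ⟨ψ, A, hψ01, fun _ => rfl⟩
  -- partition of unity
  have hsum : ∀ x : Set.Icc (0:ℝ) 1, ∑ i, ψ i x = 1 := by
    intro x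
    refine hat_sum n hn ((n : ℝ) * (x : ℝ)) ?_ ?_
    · exact mul_nonneg hnR.le x.2.1
    · calc (n : ℝ) * (x : ℝ) ≤ n * 1 := by
            exact mul_le_mul_of_nonneg_left x.2.2 hnR.le
        _ = n := mul_one _
  -- pointwise error bound
  have hpt : ∀ x : Set.Icc (0:ℝ) 1, dist (f x) (g x) ≤ ω := by
    intro x
    have hterm : ∀ i, ψ i x * dist (f x) (A i) ≤ ψ i x * ω := by
      intro i
      rcases eq_or_lt_of_le (hψ01 i x).1 with h | h
      · rw [← h]; simp
      · refine mul_le_mul_of_nonneg_left ?_ (hψ01 i x).1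
        have habs : |(n : ℝ) * (x : ℝ) - (i : ℕ)| < 1 := by
          by_contra hcon
          push_neg at hcon
          have : ψ i x = 0 := max_eq_left (by linarith)
          rw [this] at h; exact lt_irrefl 0 h
        have hd : |(x : ℝ) - ((node i : ℝ))| < 1 / n := by
          have : (x : ℝ) - ((i : ℕ) : ℝ) / n = ((n : ℝ) * x - (i : ℕ)) / n := by
            field_simp
          show |(x : ℝ) - ((i : ℕ) : ℝ) / n| < 1 / n
          rw [this, abs_div, abs_of_pos hnR]
          gcongr
        exact le_csSup hbdd ⟨x, node i, hd, rfl⟩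
    -- lo bound
    have hglo : (g x).lo = ∑ i, ψ i x * (A i).lo := by
      rw [hg]
      show KC.loHom (∑ i, ψ i x • A i) = _
      rw [map_sum]
      exact Finset.sum_congr rfl fun i _ => KC.smul_lo (hψ01 i x).1 (A i)
    have hghi : (g x).hi = ∑ i, ψ i x * (A i).hi := by
      rw [hg]
      show KC.hiHom (∑ i, ψ i x • A i) = _
      rw [map_sum]
      exact Finset.sum_congr rfl fun i _ => KC.smul_hi (hψ01 i x).1 (A i)
    have key : ∀ (u : KC → ℝ), (∀ B C : KC, |u B - u C| ≤ dist B C) →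
        |u (f x) - ∑ i, ψ i x * u (A i)| ≤ ω := by
      intro u hu
      have h1 : u (f x) - ∑ i, ψ i x * u (A i) = ∑ i, ψ i x * (u (f x) - u (A i)) := by
        rw [Finset.sum_congr rfl (fun i _ => mul_sub (ψ i x) (u (f x)) (u (A i)))]
        rw [Finset.sum_sub_distrib, ← Finset.sum_mul, hsum, one_mul]
      rw [h1]
      calc |∑ i, ψ i x * (u (f x) - u (A i))|
          ≤ ∑ i, |ψ i x * (u (f x) - u (A i))| := Finset.abs_sum_le_sum_abs _ _
        _ = ∑ i, ψ i x * |u (f x) - u (A i)| := by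
            refine Finset.sum_congr rfl fun i _ => ?_
            rw [abs_mul, abs_of_nonneg (hψ01 i x).1]
        _ ≤ ∑ i, ψ i x * ω := by
            refine Finset.sum_le_sum fun i _ => ?_
            calc ψ i x * |u (f x) - u (A i)|
                ≤ ψ i x * dist (f x) (A i) :=
                  mul_le_mul_of_nonneg_left (hu _ _) (hψ01 i x).1
              _ ≤ ψ i x * ω := hterm i
        _ = ω := by rw [← Finset.sum_mul, hsum, one_mul]
    rw [KC.dist_def, hglo, hghi]
    refine max_le ?_ ?_
    · exact key KC.lo fun B C => le_max_left _ _
    · exact key KC.hi fun B C => le_max_right _ _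
  -- conclude
  have hsup : (⨆ x, dist (f x) (g x)) ≤ ω := ciSup_le hpt
  have hbelow : BddBelow {e | ∃ g ∈ Tn n, e = ⨆ x, dist (f x) (g x)} := by
    refine ⟨0, fun e ⟨h, _, he⟩ => ?_⟩
    rw [he]
    exact Real.iSup_nonneg fun x => dist_nonneg
  calc approxErr n f ≤ ⨆ x, dist (f x) (g x) := csInf_le hbelow ⟨g, hgT, rfl⟩
    _ ≤ ω := hsup
    _ ≤ 2 * ω := by linarith
end

section
/- Let f : [0,1] → K_C be continuous with non-decreasing length function (len(f)(x) ≤ len(f)(y) whenever x ≤ y). Then for every n ∈ ℕ, E_{n,f} ≤ 2·ω(f, 1/n), where E_{n,f} is the infimum over all g of the form ∑_{i=0}^n ψ_i(x)A_i (ψ_i : [0,1] → [0,1] continuous, A_i ∈ K_C) of sup_{x∈[0,1]} d_H(f(x), g(x)), and ω is the modulus of continuity of f with respect to d_H. -/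
namespace Jackson

noncomputable def hat (t : ℝ) : ℝ := max 0 (1 - |t|)

lemma hat_nonneg (t : ℝ) : 0 ≤ hat t := le_max_left _ _

lemma hat_le_one (t : ℝ) : hat t ≤ 1 :=
  max_le zero_le_one (by linarith [abs_nonneg t])

lemma hat_eq_zero {t : ℝ} (h : 1 ≤ |t|) : hat t = 0 := max_eq_left (by linarith)

lemma hat_lt_of_ne {t : ℝ} (h : hat t ≠ 0) : |t| < 1 := by
  by_contra h'
  exact h (hat_eq_zero (not_lt.mp h'))

lemma hat_eq {t : ℝ} (h : |t| ≤ 1) : hat t = 1 - |t| := max_eq_right (by linarith)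

lemma hat_continuous : Continuous hat :=
  continuous_const.max (continuous_const.sub continuous_abs)

lemma hat_sum (n : ℕ) (hn : 0 < n) (t : ℝ) (h0 : 0 ≤ t) (h1 : t ≤ n) :
    ∑ i : Fin (n + 1), hat (t - i.val) = 1 := by
  set k := min (Nat.floor t) (n - 1) with hkdef
  have hk1 : (k : ℝ) ≤ t := by
    have h2 : (k : ℝ) ≤ (Nat.floor t : ℝ) := by exact_mod_cast min_le_left _ _
    linarith [Nat.floor_le h0]
  have hk2 : t ≤ (k : ℝ) + 1 := by
    rcases le_or_gt (Nat.floor t) (n - 1) with h | h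
    · have hke : k = Nat.floor t := min_eq_left h
      rw [hke]
      exact (Nat.lt_floor_add_one t).le
    · have hke : k = n - 1 := min_eq_right h.le
      have hnt : (n : ℝ) ≤ ((n - 1 : ℕ) : ℝ) + 1 := by
        push_cast [Nat.cast_sub hn]
        linarith
      rw [hke]
      linarith
  have hk3 : k + 1 ≤ n := by omega
  set a : Fin (n + 1) := ⟨k, by omega⟩ with hadef
  set b : Fin (n + 1) := ⟨k + 1, by omega⟩ with hbdef
  have hab : a ≠ b := by simp [hadef, hbdef, Fin.ext_iff]
  have hzero : ∀ i ∈ (Finset.univ : Finset (Fin (n + 1))),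
      i ∉ ({a, b} : Finset (Fin (n + 1))) → hat (t - i.val) = 0 := by
    intro i _ hi
    simp only [Finset.mem_insert, Finset.mem_singleton, hadef, hbdef, Fin.ext_iff] at hi
    push_neg at hi
    apply hat_eq_zero
    rcases lt_or_gt_of_ne hi.1 with h | h
    · -- i.val < k, so t - i ≥ 1
      have : (i.val : ℝ) + 1 ≤ (k : ℝ) := by exact_mod_cast h
      rw [le_abs]
      left; linarith
    · -- i.val > k, and ≠ k+1, so i.val ≥ k+2
      have h2 : k + 2 ≤ i.val := by omega
      have : (k : ℝ) + 2 ≤ (i.val : ℝ) := by exact_mod_cast h2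
      rw [le_abs]
      right; linarith
  rw [← Finset.sum_subset (Finset.subset_univ ({a, b} : Finset (Fin (n + 1)))) hzero,
    Finset.sum_pair hab]
  have ha1 : |t - (a.val : ℝ)| ≤ 1 := by
    simp only [hadef]
    rw [abs_le]; constructor <;> linarith
  have hb1 : |t - (b.val : ℝ)| ≤ 1 := by
    simp only [hbdef]
    push_cast
    rw [abs_le]; constructor <;> linarith
  rw [hat_eq ha1, hat_eq hb1]
  simp only [hadef, hbdef]
  push_cast
  rw [abs_of_nonneg (by linarith), abs_of_nonpos (by linarith)]
  ring

lemma smul_lo {c : ℝ} (hc : 0 ≤ c) (A : KC) : (c • A).lo = c * A.lo :=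
  min_eq_left (mul_le_mul_of_nonneg_left A.isLe hc)

lemma smul_hi {c : ℝ} (hc : 0 ≤ c) (A : KC) : (c • A).hi = c * A.hi :=
  max_eq_right (mul_le_mul_of_nonneg_left A.isLe hc)

noncomputable def loHom : KC →+ ℝ := { toFun := KC.lo, map_zero' := rfl, map_add' := fun _ _ => rfl }
noncomputable def hiHom : KC →+ ℝ := { toFun := KC.hi, map_zero' := rfl, map_add' := fun _ _ => rfl }

end Jackson

theorem jackson_nondecreasing (f : C(Set.Icc (0:ℝ) 1, KC))
    (hlen : ∀ x y : Set.Icc (0:ℝ) 1, (x:ℝ) ≤ (y:ℝ) → KC.len (f x) ≤ KC.len (f y))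
    (n : ℕ) (hn : 0 < n) :
    approxErr n f ≤ 2 * omegaMod f (1 / n) := by
  haveI : Nonempty (Set.Icc (0:ℝ) 1) := ⟨⟨0, by norm_num⟩⟩
  have hn' : (0:ℝ) < n := by exact_mod_cast hn
  set ω := omegaMod f (1 / n) with hω
  -- boundedness of distances in the range of f
  obtain ⟨C, hC⟩ : ∃ C, ∀ x y : Set.Icc (0:ℝ) 1, dist (f x) (f y) ≤ C := by
    have h1 : IsCompact (Set.range f) := isCompact_range f.continuous
    obtain ⟨C, hC⟩ := Metric.isBounded_iff.mp h1.isBounded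
    exact ⟨C, fun x y => hC (Set.mem_range_self x) (Set.mem_range_self y)⟩
  have hBdd : BddAbove {d | ∃ x y : Set.Icc (0:ℝ) 1,
      |(x:ℝ) - (y:ℝ)| < 1 / n ∧ d = dist (f x) (f y)} := by
    refine ⟨C, ?_⟩
    rintro d ⟨x, y, -, rfl⟩
    exact hC x y
  have homega : ∀ x y : Set.Icc (0:ℝ) 1, |(x:ℝ) - (y:ℝ)| < 1 / n →
      dist (f x) (f y) ≤ ω := fun x y h => le_csSup hBdd ⟨x, y, h, rfl⟩
  have h2ω : ∀ x y : Set.Icc (0:ℝ) 1, |(x:ℝ) - (y:ℝ)| ≤ 1 / n →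
      dist (f x) (f y) ≤ 2 * ω := by
    intro x y h
    have hm : ((x:ℝ) + (y:ℝ)) / 2 ∈ Set.Icc (0:ℝ) 1 := by
      constructor
      · linarith [x.2.1, y.2.1]
      · linarith [x.2.2, y.2.2]
    set m : Set.Icc (0:ℝ) 1 := ⟨((x:ℝ) + (y:ℝ)) / 2, hm⟩ with hmdef
    have hpos : (0:ℝ) < 1 / n := by positivity
    have e1 : |(x:ℝ) - (m:ℝ)| < 1 / n := by
      have : (x:ℝ) - (m:ℝ) = ((x:ℝ) - (y:ℝ)) / 2 := by simp [hmdef]; ring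
      rw [this, abs_div, abs_of_pos (by norm_num : (0:ℝ) < 2)]
      linarith
    have e2 : |(m:ℝ) - (y:ℝ)| < 1 / n := by
      have : (m:ℝ) - (y:ℝ) = ((x:ℝ) - (y:ℝ)) / 2 := by simp [hmdef]; ring
      rw [this, abs_div, abs_of_pos (by norm_num : (0:ℝ) < 2)]
      linarith
    calc dist (f x) (f y) ≤ dist (f x) (f m) + dist (f m) (f y) := dist_triangle _ _ _
      _ ≤ ω + ω := add_le_add (homega x m e1) (homega m y e2)
      _ = 2 * ω := by ring
  -- construction of g
  have hnode : ∀ i : Fin (n + 1), (i.val : ℝ) / n ∈ Set.Icc (0:ℝ) 1 := by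
    intro i
    constructor
    · positivity
    · rw [div_le_one hn']
      exact_mod_cast Nat.lt_succ_iff.mp i.isLt
  set node : Fin (n + 1) → Set.Icc (0:ℝ) 1 := fun i => ⟨(i.val : ℝ) / n, hnode i⟩ with hnodedef
  set ψ : Fin (n + 1) → C(Set.Icc (0:ℝ) 1, ℝ) := fun i =>
    ⟨fun x => Jackson.hat ((n:ℝ) * (x:ℝ) - (i.val : ℝ)),
      Jackson.hat_continuous.comp
        ((continuous_const.mul continuous_subtype_val).sub continuous_const)⟩ with hψdef
  have hψ01 : ∀ i x, ψ i x ∈ Set.Icc (0:ℝ) 1 := fun i x =>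
    ⟨Jackson.hat_nonneg _, Jackson.hat_le_one _⟩
  have hψnn : ∀ (i : Fin (n+1)) (x : Set.Icc (0:ℝ) 1), 0 ≤ ψ i x := fun i x =>
    Jackson.hat_nonneg _
  have hψsum : ∀ x : Set.Icc (0:ℝ) 1, ∑ i, ψ i x = 1 := by
    intro x
    have h0 : 0 ≤ (n:ℝ) * (x:ℝ) := mul_nonneg hn'.le x.2.1
    have h1 : (n:ℝ) * (x:ℝ) ≤ n := by nlinarith [x.2.2]
    simpa [hψdef] using Jackson.hat_sum n hn ((n:ℝ) * (x:ℝ)) h0 h1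
  set A : Fin (n + 1) → KC := fun i => f (node i) with hAdef
  set g : Set.Icc (0:ℝ) 1 → KC := fun x => ∑ i, ψ i x • A i with hgdef
  -- pointwise bound
  have key : ∀ x : Set.Icc (0:ℝ) 1, dist (f x) (g x) ≤ 2 * ω := by
    intro x
    have hglo : (g x).lo = ∑ i, ψ i x * (A i).lo := by
      rw [hgdef]
      rw [show (∑ i, ψ i x • A i).lo = Jackson.loHom (∑ i, ψ i x • A i) from rfl, map_sum]
      exact Finset.sum_congr rfl fun i _ => Jackson.smul_lo (hψnn i x) _
    have hghi : (g x).hi = ∑ i, ψ i x * (A i).hi := by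
      rw [hgdef]
      rw [show (∑ i, ψ i x • A i).hi = Jackson.hiHom (∑ i, ψ i x • A i) from rfl, map_sum]
      exact Finset.sum_congr rfl fun i _ => Jackson.smul_hi (hψnn i x) _
    have hterm : ∀ i : Fin (n + 1), ψ i x * dist (f x) (A i) ≤ ψ i x * (2 * ω) := by
      intro i
      rcases eq_or_ne (ψ i x) 0 with h0 | h0
      · rw [h0, zero_mul, zero_mul]
      · refine mul_le_mul_of_nonneg_left ?_ (hψnn i x)
        have habs : |(n:ℝ) * (x:ℝ) - (i.val : ℝ)| < 1 := Jackson.hat_lt_of_ne h0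
        refine h2ω x (node i) ?_
        have hx : (x:ℝ) - ((node i : ℝ)) = ((n:ℝ) * (x:ℝ) - (i.val : ℝ)) / n := by
          simp only [hnodedef]
          field_simp
        rw [hx, abs_div, abs_of_pos hn']
        exact div_le_div_of_nonneg_right habs.le hn'.le
    have hbound : ∀ (sel : KC → ℝ), (∀ B B' : KC, |sel B - sel B'| ≤ dist B B') →
        sel (g x) = ∑ i, ψ i x * sel (A i) →
        |sel (f x) - sel (g x)| ≤ 2 * ω := by
      intro sel hsel hselg
      have heq : sel (f x) - sel (g x) = ∑ i, ψ i x * (sel (f x) - sel (A i)) := by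
        rw [hselg]
        rw [Finset.sum_congr rfl (fun i _ => mul_sub (ψ i x) (sel (f x)) (sel (A i))),
          Finset.sum_sub_distrib, ← Finset.sum_mul, hψsum x, one_mul]
      calc |sel (f x) - sel (g x)| = |∑ i, ψ i x * (sel (f x) - sel (A i))| := by rw [heq]
        _ ≤ ∑ i, |ψ i x * (sel (f x) - sel (A i))| := Finset.abs_sum_le_sum_abs _ _
        _ ≤ ∑ i, ψ i x * dist (f x) (A i) := Finset.sum_le_sum fun i _ => by
              rw [abs_mul, abs_of_nonneg (hψnn i x)]
              exact mul_le_mul_of_nonneg_left (hsel _ _) (hψnn i x)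
        _ ≤ ∑ i, ψ i x * (2 * ω) := Finset.sum_le_sum fun i _ => hterm i
        _ = 2 * ω := by rw [← Finset.sum_mul, hψsum x, one_mul]
    have hd : dist (f x) (g x) =
        max |(f x).lo - (g x).lo| |(f x).hi - (g x).hi| := rfl
    rw [hd]
    apply max_le
    · exact hbound KC.lo (fun B B' => le_max_left _ _) hglo
    · exact hbound KC.hi (fun B B' => le_max_right _ _) hghi
  -- conclude
  have hmem : (⨆ x, dist (f x) (g x)) ∈
      {e | ∃ g' ∈ Tn n, e = ⨆ x, dist (f x) (g' x)} :=
    ⟨g, ⟨ψ, A, hψ01, fun x => rfl⟩, rfl⟩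
  have hbdd : BddBelow {e | ∃ g' ∈ Tn n, e = ⨆ x, dist (f x) (g' x)} := by
    refine ⟨0, ?_⟩
    rintro e ⟨g', -, rfl⟩
    exact Real.iSup_nonneg fun x => dist_nonneg
  calc approxErr n f ≤ ⨆ x, dist (f x) (g x) := csInf_le hbdd hmem
    _ ≤ 2 * ω := ciSup_le key
end
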